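/- arXiv:1308.1971 — 2 statements merged into one kernel-verified Lean document; each statement's English description precedes it below -/
import Mathlib

section
/- Suppose a configuration satisfies Tree Initially and no MixSwap is applicable at any tuple. Then for all colors i, j ∈ ℛ with i ≠ j and all distinct nodes u, v ∈ V_i ∩ V_j that are both (i,j)-mixed (i.e. d_i(u) ≥ 1, d_j(u) ≥ 1, d_i(v) ≥ 1, d_j(v) ≥ 1), either (L_i(u) < L_i(v) and L_j(u) < L_j(v)) or (L_i(v) < L_i(u) and L_j(v) < L_j(u)). -/
namespace P2P

/-- A walk of length `n` from `r` to `u` in the edge set `E`. -/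
def Walk {α : Type*} (E : Finset (α × α)) (r u : α) (n : ℕ) : Prop :=
  ∃ f : ℕ → α, f 0 = r ∧ f n = u ∧ ∀ k < n, (f k, f (k + 1)) ∈ E

/-- Depth of `u` below root `r`: minimal number of edges of a directed walk
(equivalently, of a directed path) from `r` to `u`; `⊤` if unreachable. -/
noncomputable def depth {α : Type*} (E : Finset (α × α)) (r u : α) : ℕ∞ :=
  sInf {n : ℕ∞ | ∃ m : ℕ, n = (m : ℕ∞) ∧ Walk E r u m}

/-- Out-degree of `u` in `E`. -/
def outDeg {α : Type*} [DecidableEq α] (E : Finset (α × α)) (u : α) : ℕ :=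
  (E.filter fun e => e.1 = u).card

/-- In-degree of `u` in `E`. -/
def inDeg {α : Type*} [DecidableEq α] (E : Finset (α × α)) (u : α) : ℕ :=
  (E.filter fun e => e.2 = u).card

/-- A configuration assigns to each color an edge set. -/
abbrev Cfg := ℕ → Finset (ℕ × ℕ)

/-- The node set `V = {1, …, N}`. -/
def V (N : ℕ) : Finset ℕ := Finset.Icc 1 N

/-- The root set `ℛ = {1, …, M}`. -/
def R (M : ℕ) : Finset ℕ := Finset.Icc 1 M

/-- `u` has an incoming `i`-edge (root `i` counts its server link). -/
def HasIn (E : Cfg) (i u : ℕ) : Prop := (∃ w, (w, u) ∈ E i) ∨ u = i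

/-- Incoming count of `u`: incoming edges of all colors, plus 1 if `u` is a root. -/
def incCount (M : ℕ) (E : Cfg) (u : ℕ) : ℕ :=
  (∑ i ∈ R M, inDeg (E i) u) + (if u ∈ R M then 1 else 0)

/-- Total out-degree `d(u)`. -/
def dtot (M : ℕ) (E : Cfg) (u : ℕ) : ℕ := ∑ i ∈ R M, outDeg (E i) u

/-- Edges are ordered pairs of distinct nodes of `V`. -/
def ValidEdges (N M : ℕ) (E : Cfg) : Prop :=
  ∀ i ∈ R M, ∀ e ∈ E i, e.1 ∈ V N ∧ e.2 ∈ V N ∧ e.1 ≠ e.2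

/-- Assumption (Tree Initially). -/
def TreeInit (N M K : ℕ) (E : Cfg) : Prop :=
  (∀ u ∈ V N, incCount M E u ≤ K) ∧
  (∀ i ∈ R M, ∀ u ∈ V N, inDeg (E i) u ≤ 1) ∧
  (∀ i ∈ R M, inDeg (E i) i = 0)

/-- A node is available if it has spare capacity and some incoming edge. -/
def Available (M : ℕ) (E : Cfg) (dbar : ℕ → ℕ) (v : ℕ) : Prop :=
  dtot M E v < dbar v ∧ ∃ i ∈ R M, HasIn E i v

/-- An Add is applicable at `(u_p, u, i)`. -/
def AddApp (N M K : ℕ) (E : Cfg) (dbar : ℕ → ℕ) (up u i : ℕ) : Prop :=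
  i ∈ R M ∧ up ∈ V N ∧ u ∈ V N ∧
  incCount M E u < K ∧ ¬ HasIn E i u ∧ HasIn E i up ∧ dtot M E up < dbar up

/-- An Insert is applicable at `(u_p, u, i)` with `i`-child `u_c` of `u_p`. -/
def InsertApp (N M K : ℕ) (E : Cfg) (up u uc i : ℕ) : Prop :=
  i ∈ R M ∧ up ∈ V N ∧ u ∈ V N ∧
  incCount M E u < K ∧ ¬ HasIn E i u ∧ HasIn E i up ∧ (up, uc) ∈ E i

/-- A Jump is applicable at `(u, v, i)`. -/
def JumpApp (M : ℕ) (E : Cfg) (dbar : ℕ → ℕ) (u v i : ℕ) : Prop :=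
  i ∈ R M ∧ (∃ up, (up, u) ∈ E i) ∧ Available M E dbar v ∧ HasIn E i v ∧
  depth (E i) i v + 1 < depth (E i) i u

/-- A LeafSwap is applicable at `(u, v, i)`. -/
def LeafSwapApp (M : ℕ) (E : Cfg) (u v i : ℕ) : Prop :=
  i ∈ R M ∧ (∃ up, (up, u) ∈ E i) ∧ (∃ vp, (vp, v) ∈ E i) ∧
  outDeg (E i) v = 0 ∧ 0 < outDeg (E i) u ∧
  depth (E i) i v < depth (E i) i u

/-- A MixSwap is applicable at `(u, u_c, v, v_c, i, j)`. -/
def MixSwapApp (M : ℕ) (E : Cfg) (u uc v vc i j : ℕ) : Prop :=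
  i ∈ R M ∧ j ∈ R M ∧ i ≠ j ∧ u ≠ v ∧
  (u, uc) ∈ E i ∧ (v, vc) ∈ E j ∧ uc ≠ v ∧ vc ≠ u ∧
  depth (E i) i v ≤ depth (E i) i u ∧ depth (E j) j u ≤ depth (E j) j v ∧
  ((depth (E i) i u, depth (E j) j u) ≠ (depth (E i) i v, depth (E j) j v) ∨
    ((u : ℤ) - (v : ℤ)) * ((j : ℤ) - (i : ℤ)) > 0)

/-- Result of performing an Add. -/
def doAdd (E : Cfg) (up u i : ℕ) : Cfg :=
  fun l => if l = i then insert (up, u) (E l) else E l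

/-- Result of performing an Insert. -/
def doInsert (E : Cfg) (up u uc i : ℕ) : Cfg :=
  fun l => if l = i then insert (up, u) (insert (u, uc) ((E l).erase (up, uc))) else E l

/-- Result of performing a Jump (parent `u_p` is replaced by `v`). -/
def doJump (E : Cfg) (up u v i : ℕ) : Cfg :=
  fun l => if l = i then insert (v, u) ((E l).erase (up, u)) else E l

/-- Result of performing a LeafSwap (`u` and `v` exchange parents). -/
def doLeafSwap (E : Cfg) (up u vp v i : ℕ) : Cfg :=
  fun l => if l = i then
    insert (up, v) (insert (vp, u) (((E l).erase (up, u)).erase (vp, v))) else E l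

/-- Result of performing a MixSwap (`u` and `v` exchange the children `u_c`, `v_c`). -/
def doMixSwap (E : Cfg) (u uc v vc i j : ℕ) : Cfg :=
  fun l => if l = i then insert (v, uc) ((E l).erase (u, uc))
    else if l = j then insert (u, vc) ((E l).erase (v, vc)) else E l

/-- One step of the algorithm: perform any applicable Add, Insert, Jump,
LeafSwap or MixSwap. -/
def Step (N M K : ℕ) (dbar : ℕ → ℕ) (E E' : Cfg) : Prop :=
  (∃ up u i, AddApp N M K E dbar up u i ∧ E' = doAdd E up u i) ∨
  (∃ up u uc i, InsertApp N M K E up u uc i ∧ E' = doInsert E up u uc i) ∨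
  (∃ up u v i, (up, u) ∈ E i ∧ JumpApp M E dbar u v i ∧ E' = doJump E up u v i) ∨
  (∃ up u vp v i, (up, u) ∈ E i ∧ (vp, v) ∈ E i ∧ LeafSwapApp M E u v i ∧
      E' = doLeafSwap E up u vp v i) ∨
  (∃ u uc v vc i j, MixSwapApp M E u uc v vc i j ∧ E' = doMixSwap E u uc v vc i j)

/-- Total number of edges `|E|`. -/
def numE (M : ℕ) (E : Cfg) : ℕ := ∑ i ∈ R M, (E i).card

/-- `Y = Σ_u Σ_i min(L_i(u), N)`. -/
noncomputable def Yval (N M : ℕ) (E : Cfg) : ℕ :=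
  ∑ u ∈ V N, ∑ i ∈ R M, (min (depth (E i) i u) (N : ℕ∞)).toNat

/-- `S = Σ_u u · Σ_i i · d_i(u)`. -/
def Sval (N M : ℕ) (E : Cfg) : ℕ :=
  ∑ u ∈ V N, u * ∑ i ∈ R M, i * outDeg (E i) u

/-!
If two distinct `(i,j)`-mixed nodes `u`, `v` do not have strictly ordered depth vectors, then
after possibly exchanging them (the tie `L(u) = L(v)` is broken by the sign of `(u - v)(j - i)`)
we have `L_i(v) ≤ L_i(u)` and `L_j(u) ≤ L_j(v)`. Pick an `i`-child `u_c` of `u` and a `j`-child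
`v_c` of `v`. In a forest a child is strictly deeper than its parent, so `u_c = v` would force
`L_i(u) < L_i(v)`, and `v_c = u` would force `L_j(v) < L_j(u)`. Hence a MixSwap is applicable at
`(u, u_c, v, v_c, i, j)`.
-/

section Depth

variable {α : Type*} {E : Finset (α × α)} {r u v : α}

lemma depth_le_of_walk {m : ℕ} (h : Walk E r u m) : depth E r u ≤ m :=
  sInf_le ⟨m, rfl, h⟩

lemma depth_add_one_le_of_unique_parent (hvr : v ≠ r) (hpar : ∀ w, (w, v) ∈ E → w = u) :
    depth E r u + 1 ≤ depth E r v := by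
  refine le_sInf ?_
  rintro _ ⟨m, rfl, f, hf0, hfm, hfE⟩
  cases m with
  | zero => exact absurd (hfm.symm.trans hf0) hvr
  | succ m =>
    have hlast : f m = u := hpar _ (hfm ▸ hfE m m.lt_succ_self)
    have hu : depth E r u ≤ m := depth_le_of_walk ⟨f, hf0, hlast, fun k hk => hfE k (by omega)⟩
    push_cast
    exact add_le_add_left hu 1

variable [DecidableEq α]

lemma exists_mem_of_one_le_outDeg (h : 1 ≤ outDeg E u) : ∃ c, (u, c) ∈ E := by
  obtain ⟨e, he⟩ := Finset.card_pos.mp h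
  obtain ⟨heE, rfl⟩ := Finset.mem_filter.mp he
  exact ⟨e.2, heE⟩

lemma eq_of_mem_of_inDeg_le_one (h : inDeg E v ≤ 1) {w : α} (hw : (w, v) ∈ E)
    (hu : (u, v) ∈ E) : w = u :=
  congrArg Prod.fst <| Finset.card_le_one.mp h _ (Finset.mem_filter.mpr ⟨hw, rfl⟩) _
    (Finset.mem_filter.mpr ⟨hu, rfl⟩)

lemma ne_of_mem_of_inDeg_eq_zero (h : inDeg E r = 0) (huv : (u, v) ∈ E) : v ≠ r := by
  rintro rfl
  have hmem : (u, v) ∈ E.filter fun e => e.2 = v := Finset.mem_filter.mpr ⟨huv, rfl⟩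
  rw [Finset.card_eq_zero.mp h] at hmem
  exact Finset.notMem_empty _ hmem

lemma depth_lt_depth_of_mem (hroot : inDeg E r = 0) (hv : inDeg E v ≤ 1) (huv : (u, v) ∈ E)
    (hu : depth E r u ≠ ⊤) : depth E r u < depth E r v :=
  (ENat.add_one_le_iff hu).mp <| depth_add_one_le_of_unique_parent
    (ne_of_mem_of_inDeg_eq_zero hroot huv) fun _ hw => eq_of_mem_of_inDeg_le_one hv hw huv

end Depth

lemma le_and_le_or_le_and_le_of_not_lt_and_lt {β : Type*} [LinearOrder β] {x y x' y' : β}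
    (h : ¬((x < x' ∧ y < y') ∨ (x' < x ∧ y' < y))) :
    (x' ≤ x ∧ y ≤ y') ∨ (x ≤ x' ∧ y' ≤ y) := by
  push Not at h
  rcases lt_trichotomy x x' with hx | rfl | hx
  · exact Or.inr ⟨hx.le, h.1 hx⟩
  · exact (le_total y y').imp (⟨le_rfl, ·⟩) (⟨le_rfl, ·⟩)
  · exact Or.inl ⟨hx.le, h.2 hx⟩

lemma exists_mixSwapApp_of_depth_le {N M K : ℕ} {E : Cfg} (htree : TreeInit N M K E) {i j u v : ℕ}
    (hi : i ∈ R M) (hj : j ∈ R M) (hij : i ≠ j) (huv : u ≠ v) (hu : u ∈ V N) (hv : v ∈ V N)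
    (hiu : depth (E i) i u ≠ ⊤) (hjv : depth (E j) j v ≠ ⊤)
    (hdiu : 1 ≤ outDeg (E i) u) (hdjv : 1 ≤ outDeg (E j) v)
    (hi_le : depth (E i) i v ≤ depth (E i) i u) (hj_le : depth (E j) j u ≤ depth (E j) j v)
    (htie : (depth (E i) i u, depth (E j) j u) ≠ (depth (E i) i v, depth (E j) j v) ∨
      ((u : ℤ) - (v : ℤ)) * ((j : ℤ) - (i : ℤ)) > 0) :
    ∃ uc vc, MixSwapApp M E u uc v vc i j := by
  obtain ⟨_, hin, hroot⟩ := htree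
  obtain ⟨uc, huc⟩ := exists_mem_of_one_le_outDeg hdiu
  obtain ⟨vc, hvc⟩ := exists_mem_of_one_le_outDeg hdjv
  have huc_ne : uc ≠ v := by
    rintro rfl
    exact (depth_lt_depth_of_mem (hroot i hi) (hin i hi uc hv) huc hiu).not_ge hi_le
  have hvc_ne : vc ≠ u := by
    rintro rfl
    exact (depth_lt_depth_of_mem (hroot j hj) (hin j hj vc hu) hvc hjv).not_ge hj_le
  exact ⟨uc, vc, hi, hj, hij, huv, huc, hvc, huc_ne, hvc_ne, hi_le, hj_le, htie⟩

theorem mixed_nodes_chain_general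
    (N M K : ℕ)
    (E : Cfg)
    (htree : TreeInit N M K E)
    (hnomix : ∀ u uc v vc i j : ℕ, ¬ MixSwapApp M E u uc v vc i j) :
    ∀ i ∈ R M, ∀ j ∈ R M, i ≠ j →
      ∀ u ∈ V N, ∀ v ∈ V N, u ≠ v →
      depth (E i) i u ≠ ⊤ → depth (E j) j u ≠ ⊤ →
      depth (E i) i v ≠ ⊤ → depth (E j) j v ≠ ⊤ →
      1 ≤ outDeg (E i) u → 1 ≤ outDeg (E j) u →
      1 ≤ outDeg (E i) v → 1 ≤ outDeg (E j) v →
      (depth (E i) i u < depth (E i) i v ∧ depth (E j) j u < depth (E j) j v) ∨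
      (depth (E i) i v < depth (E i) i u ∧ depth (E j) j v < depth (E j) j u) := by
  intro i hi j hj hij u hu v hv huv hiu hju hiv hjv hdiu hdju hdiv hdjv
  by_contra hchain
  have swap_uv := exists_mixSwapApp_of_depth_le htree hi hj hij huv hu hv hiu hjv hdiu hdjv
  have swap_vu := exists_mixSwapApp_of_depth_le htree hi hj hij huv.symm hv hu hiv hju hdiv hdju
  have no_swap : ∀ {a b : ℕ}, (∃ uc vc, MixSwapApp M E a uc b vc i j) → False :=
    fun ⟨uc, vc, h⟩ => hnomix _ uc _ vc i j h
  by_cases htie : (depth (E i) i u, depth (E j) j u) = (depth (E i) i v, depth (E j) j v)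
  · obtain ⟨hi_eq, hj_eq⟩ := Prod.mk.inj htie
    have hu_ne : (u : ℤ) - v ≠ 0 := sub_ne_zero.mpr (by exact_mod_cast huv)
    have hj_ne : (j : ℤ) - i ≠ 0 := sub_ne_zero.mpr (by exact_mod_cast hij.symm)
    rcases (mul_ne_zero hu_ne hj_ne).lt_or_gt with hneg | hpos
    · exact no_swap (swap_vu hi_eq.le hj_eq.ge (Or.inr (by linarith)))
    · exact no_swap (swap_uv hi_eq.ge hj_eq.le (Or.inr hpos))
  · rcases le_and_le_or_le_and_le_of_not_lt_and_lt hchain with ⟨hi_le, hj_le⟩ | ⟨hi_le, hj_le⟩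
    · exact no_swap (swap_uv hi_le hj_le (Or.inl htie))
    · exact no_swap (swap_vu hi_le hj_le (Or.inl (Ne.symm htie)))

/-- if no MixSwap is applicable anywhere, then the depth vectors of
any two distinct `(i,j)`-mixed nodes of `V_i ∩ V_j` are strictly ordered. -/
theorem mixed_nodes_chain
    (N M K : ℕ) (hK : 0 < K) (hKM : K ≤ M) (hMN : M ≤ N)
    (E : Cfg)
    (hvalid : ValidEdges N M E) (htree : TreeInit N M K E)
    (hnomix : ∀ u uc v vc i j : ℕ, ¬ MixSwapApp M E u uc v vc i j) :
    ∀ i ∈ R M, ∀ j ∈ R M, i ≠ j →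
      ∀ u ∈ V N, ∀ v ∈ V N, u ≠ v →
      depth (E i) i u ≠ ⊤ → depth (E j) j u ≠ ⊤ →
      depth (E i) i v ≠ ⊤ → depth (E j) j v ≠ ⊤ →
      1 ≤ outDeg (E i) u → 1 ≤ outDeg (E j) u →
      1 ≤ outDeg (E i) v → 1 ≤ outDeg (E j) v →
      (depth (E i) i u < depth (E i) i v ∧ depth (E j) j u < depth (E j) j v) ∨
      (depth (E i) i v < depth (E i) i u ∧ depth (E j) j v < depth (E j) j u) :=
  mixed_nodes_chain_general N M K E htree hnomix

end P2P
end

section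
/- If a configuration C_0 satisfies Tree Initially, then there is no infinite sequence of configurations C_0, C_1, C_2, … in which each C_{t+1} is obtained from C_t by performing an applicable Add, Insert, Jump, LeafSwap, or MixSwap; in other words, every sequence of such updates terminates after finitely many steps. -/
namespace P2P

/-!
Tree Initially is preserved by every update: in each color a node keeps at most one parent, the
roots keep none and incoming counts stay at most `K`, so `|E| ≤ K · N`. Add and Insert increase
`|E|`. Jump, LeafSwap and MixSwap keep `|E|` and only re-attach nodes below parents that are no
deeper, so, up to exchanging the two swapped nodes, no depth grows, and some child becomes strictly
shallower unless a MixSwap exchanges nodes of equal depths. Reachable nodes have depth below `N`,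
so `Y = Σ min(L_i(u), N)` drops. In the remaining MixSwap case `Y` does not grow and
`S = Σ u · i · d_i(u)` grows by `(u - v)(j - i) > 0`. Hence `(|E|, -Y, S)` increases
lexicographically and stays bounded.
-/

section EdgeSet

variable {α : Type*} {F F' : Finset (α × α)} {r a b c p q u v w : α} {n : ℕ}

theorem Walk.eq_of_zero (h : Walk F r w 0) : w = r := by
  obtain ⟨f, h0, hw, -⟩ := h
  exact hw.symm.trans h0

theorem Walk.snoc (h : Walk F r a n) (hab : (a, b) ∈ F) : Walk F r b (n + 1) := by
  obtain ⟨f, h0, hn, hf⟩ := h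
  refine ⟨Function.update f (n + 1) b, by simp [h0], by simp, fun k hk => ?_⟩
  rcases Nat.lt_succ_iff_lt_or_eq.mp hk with hk | rfl
  · rw [Function.update_of_ne (by omega), Function.update_of_ne (by omega)]
    exact hf k hk
  · rw [Function.update_of_ne (by omega), Function.update_self, hn]
    exact hab

theorem Walk.exists_last (h : Walk F r w (n + 1)) : ∃ a, Walk F r a n ∧ (a, w) ∈ F := by
  obtain ⟨f, h0, hn, hf⟩ := h
  exact ⟨f n, ⟨f, h0, rfl, fun k hk => hf k (by omega)⟩, hn ▸ hf n (by omega)⟩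

theorem depth_le_of_walk_s6 (h : Walk F r w n) : depth F r w ≤ n :=
  sInf_le ⟨n, rfl, h⟩

theorem walk_of_depth_eq (h : depth F r w = n) : Walk F r w n := by
  have hne : {d : ℕ∞ | ∃ m : ℕ, d = m ∧ Walk F r w m}.Nonempty := by
    by_contra hempty
    rw [Set.not_nonempty_iff_eq_empty] at hempty
    simp [depth, hempty] at h
  obtain ⟨m, hm, hw⟩ : depth F r w ∈ _ := csInf_mem hne
  rw [h, Nat.cast_inj] at hm
  exact hm ▸ hw

theorem depth_self : depth F r r = 0 :=
  nonpos_iff_eq_zero.mp (by simpa using depth_le_of_walk_s6 (⟨fun _ => r, rfl, rfl, by simp⟩ :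
    Walk F r r 0))

theorem eq_of_depth_eq_zero (h : depth F r w = 0) : w = r :=
  (walk_of_depth_eq (n := 0) (by simpa using h)).eq_of_zero

theorem depth_le_depth_add_one (hab : (a, b) ∈ F) : depth F r b ≤ depth F r a + 1 := by
  by_cases ha : depth F r a = ⊤
  · simp [ha]
  obtain ⟨n, hn⟩ := ENat.ne_top_iff_exists.mp ha
  rw [← hn]
  exact_mod_cast depth_le_of_walk_s6 ((walk_of_depth_eq hn.symm).snoc hab)

theorem exists_parent_of_depth_eq_add_one (h : depth F r w = n + 1) :
    ∃ a, (a, w) ∈ F ∧ depth F r a = n := by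
  obtain ⟨a, ha, haw⟩ := (walk_of_depth_eq (n := n + 1) (by exact_mod_cast h)).exists_last
  refine ⟨a, haw, le_antisymm (depth_le_of_walk_s6 ha) ?_⟩
  have := depth_le_depth_add_one (r := r) haw
  rw [h] at this
  exact (WithTop.add_le_add_iff_right ENat.one_ne_top).mp this

theorem mem_of_depth_ne_top {S : Finset α} (hr : r ∈ S) (hS : ∀ e ∈ F, e.2 ∈ S)
    (h : depth F r w ≠ ⊤) : w ∈ S := by
  obtain ⟨n, hn⟩ := ENat.ne_top_iff_exists.mp h
  cases n with
  | zero => exact eq_of_depth_eq_zero (by exact_mod_cast hn.symm) ▸ hr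
  | succ m =>
    obtain ⟨a, ha, -⟩ := exists_parent_of_depth_eq_add_one (by exact_mod_cast hn.symm)
    exact hS _ ha

theorem exists_depth_eq_of_le (h : depth F r w = n) {k : ℕ} (hk : k ≤ n) :
    ∃ x, depth F r x = k := by
  induction n generalizing w with
  | zero => exact ⟨w, by rwa [Nat.le_zero.mp hk]⟩
  | succ n ih =>
    rcases Nat.of_le_succ hk with hk | rfl
    · obtain ⟨a, -, ha⟩ := exists_parent_of_depth_eq_add_one (by exact_mod_cast h)
      exact ih ha hk
    · exact ⟨w, h⟩

/-- The depths `0, …, L(u)` and `L(w)` are distinct and all attained in `S`. -/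
theorem depth_add_one_lt_card [DecidableEq α] {S : Finset α} (hr : r ∈ S)
    (hS : ∀ e ∈ F, e.2 ∈ S) (hw : w ∈ S) (h : depth F r u < depth F r w) :
    depth F r u + 1 < S.card := by
  obtain ⟨m, hm⟩ := ENat.ne_top_iff_exists.mp h.ne_top
  have hsub : insert (depth F r w) ((Finset.range (m + 1)).image (Nat.cast : ℕ → ℕ∞)) ⊆
      S.image (depth F r) := by
    intro d hd
    rcases Finset.mem_insert.mp hd with rfl | hd
    · exact Finset.mem_image_of_mem _ hw
    · obtain ⟨k, hk, rfl⟩ := Finset.mem_image.mp hd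
      obtain ⟨x, hx⟩ := exists_depth_eq_of_le hm.symm (Nat.lt_succ_iff.mp (Finset.mem_range.mp hk))
      exact Finset.mem_image.mpr ⟨x, mem_of_depth_ne_top hr hS (hx ▸ ENat.natCast_ne_top k), hx⟩
  have hnot : depth F r w ∉ (Finset.range (m + 1)).image (Nat.cast : ℕ → ℕ∞) := by
    simp only [Finset.mem_image, Finset.mem_range, not_exists, not_and]
    intro k hk hkw
    rw [← hm, ← hkw, Nat.cast_lt] at h
    omega
  have hcard := (Finset.card_le_card hsub).trans Finset.card_image_le
  rw [Finset.card_insert_of_notMem hnot, Finset.card_image_of_injective _ Nat.cast_injective,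
    Finset.card_range] at hcard
  rw [← hm]
  exact_mod_cast (by omega : m + 1 < S.card)

theorem depth_le_of_forall_edge (T : α → Prop)
    (hT : ∀ a b, (a, b) ∈ F → T b → ∃ a', (a', b) ∈ F' ∧ T a' ∧ depth F r a' ≤ depth F r a)
    (hw : T w) : depth F' r w ≤ depth F r w := by
  suffices H : ∀ n : ℕ, ∀ w, T w → depth F r w ≤ n → depth F' r w ≤ depth F r w by
    by_cases htop : depth F r w = ⊤
    · simp [htop]
    · obtain ⟨n, hn⟩ := ENat.ne_top_iff_exists.mp htop
      exact H n w hw hn.ge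
  intro n
  induction n with
  | zero =>
    intro w _ h0
    obtain rfl : w = r := eq_of_depth_eq_zero (nonpos_iff_eq_zero.mp (by simpa using h0))
    rw [depth_self]
    exact zero_le
  | succ n ih =>
    intro w hw hle
    rcases lt_or_eq_of_le hle with hlt | heq
    · exact ih w hw (Order.le_of_lt_add_one (by exact_mod_cast hlt))
    obtain ⟨a, haw, ha⟩ := exists_parent_of_depth_eq_add_one (by exact_mod_cast heq)
    obtain ⟨a', ha'w, hTa', ha'⟩ := hT a w haw hw
    calc depth F' r w ≤ depth F' r a' + 1 := depth_le_depth_add_one ha'w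
      _ ≤ depth F r a' + 1 := by gcongr; exact ih a' hTa' (ha'.trans ha.le)
      _ ≤ depth F r a + 1 := by gcongr
      _ = depth F r w := by rw [ha, heq]; push_cast; rfl

structure UniqueParent (F : Finset (α × α)) (r : α) : Prop where
  eq_of_mem : ∀ {a b c}, (a, c) ∈ F → (b, c) ∈ F → a = b
  not_mem_root : ∀ a, (a, r) ∉ F

theorem UniqueParent.depth_eq (hF : UniqueParent F r) (h : (a, b) ∈ F) :
    depth F r b = depth F r a + 1 := by
  refine le_antisymm (depth_le_depth_add_one h) ?_
  by_cases htop : depth F r b = ⊤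
  · simp [htop]
  obtain ⟨n, hn⟩ := ENat.ne_top_iff_exists.mp htop
  cases n with
  | zero =>
    exact (hF.not_mem_root a (eq_of_depth_eq_zero (by exact_mod_cast hn.symm) ▸ h)).elim
  | succ m =>
    obtain ⟨a', ha', hd⟩ := exists_parent_of_depth_eq_add_one (by exact_mod_cast hn.symm)
    rw [← hF.eq_of_mem ha' h, hd, ← hn]
    push_cast
    rfl

variable [DecidableEq α]

def reparent (F : Finset (α × α)) (c p q : α) : Finset (α × α) :=
  insert (q, c) (F.erase (p, c))

theorem mem_reparent {e : α × α} : e ∈ reparent F c p q ↔ e = (q, c) ∨ e ≠ (p, c) ∧ e ∈ F := by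
  simp [reparent]

theorem forall_mem_reparent {P : α × α → Prop} (hF : ∀ e ∈ F, P e) (hq : P (q, c)) :
    ∀ e ∈ reparent F c p q, P e := by
  intro e he
  rcases mem_reparent.mp he with rfl | ⟨-, he⟩
  exacts [hq, hF e he]

theorem depth_reparent_le (h : depth F r q ≤ depth F r p) (w : α) :
    depth (reparent F c p q) r w ≤ depth F r w := by
  refine depth_le_of_forall_edge (fun _ => True) (fun a b hab _ => ?_) trivial
  by_cases he : (a, b) = (p, c)
  · obtain ⟨rfl, rfl⟩ := Prod.mk.inj he
    exact ⟨q, mem_reparent.mpr (Or.inl rfl), trivial, h⟩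
  · exact ⟨a, mem_reparent.mpr (Or.inr ⟨he, hab⟩), trivial, le_rfl⟩

theorem depth_leafSwap_le (hleaf : ∀ c, (v, c) ∉ F) (hqv : q ≠ v) (huv : u ≠ v)
    (h : depth F r q ≤ depth F r p) (hw : w ≠ v) :
    depth (reparent (reparent F u p q) v q p) r w ≤ depth F r w := by
  refine depth_le_of_forall_edge (· ≠ v) (fun a b hab hb => ?_) hw
  by_cases he : (a, b) = (p, u)
  · obtain ⟨rfl, rfl⟩ := Prod.mk.inj he
    exact ⟨q, by simp [mem_reparent, huv], hqv, h⟩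
  · exact ⟨a, by simp [mem_reparent, he, hab, hb], fun ha => hleaf b (ha ▸ hab), le_rfl⟩

theorem depth_leafSwap_le_swap (hF : UniqueParent F r) (hu : (p, u) ∈ F) (hv : (q, v) ∈ F)
    (hleaf : ∀ c, (v, c) ∉ F) (hqv : q ≠ v) (h : depth F r v < depth F r u) (w : α) :
    depth (reparent (reparent F u p q) v q p) r w ≤ depth F r (Equiv.swap u v w) := by
  set F'' := reparent (reparent F u p q) v q p
  have huv : u ≠ v := by rintro rfl; exact lt_irrefl _ h
  have hpv : p ≠ v := by rintro rfl; exact hleaf u hu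
  have hqp : depth F r q ≤ depth F r p := by
    rw [hF.depth_eq hu, hF.depth_eq hv] at h
    exact ((WithTop.add_lt_add_iff_right ENat.one_ne_top).mp h).le
  have hle : ∀ x, x ≠ v → depth F'' r x ≤ depth F r x := fun x hx =>
    depth_leafSwap_le hleaf hqv huv hqp hx
  by_cases hwu : w = u
  · rw [hwu, Equiv.swap_apply_left, hF.depth_eq hv]
    calc depth F'' r u ≤ depth F'' r q + 1 :=
          depth_le_depth_add_one (by simp [F'', mem_reparent, huv])
      _ ≤ depth F r q + 1 := by gcongr; exact hle q hqv
  by_cases hwv : w = v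
  · rw [hwv, Equiv.swap_apply_right, hF.depth_eq hu]
    calc depth F'' r v ≤ depth F'' r p + 1 := depth_le_depth_add_one (by simp [F'', mem_reparent])
      _ ≤ depth F r p + 1 := by gcongr; exact hle p hpv
  rw [Equiv.swap_apply_of_ne_of_ne hwu hwv]
  exact hle w hwv

theorem card_reparent (hpc : (p, c) ∈ F) (hqc : (q, c) ∉ F) :
    (reparent F c p q).card = F.card := by
  rw [reparent, Finset.card_insert_of_notMem fun h => hqc (Finset.mem_of_mem_erase h),
    Finset.card_erase_add_one hpc]

theorem inDeg_insert {e : α × α} (he : e ∉ F) (w : α) :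
    inDeg (insert e F) w = inDeg F w + if e.2 = w then 1 else 0 := by
  unfold inDeg
  rw [Finset.filter_insert]
  split_ifs with h
  · rw [Finset.card_insert_of_notMem fun h' => he (Finset.mem_filter.mp h').1]
  · rfl

theorem inDeg_reparent (hpc : (p, c) ∈ F) (hqc : (q, c) ∉ F) :
    inDeg (reparent F c p q) = inDeg F := by
  funext w
  rw [reparent, inDeg_insert fun h => hqc (Finset.mem_of_mem_erase h)]
  unfold inDeg
  rw [Finset.filter_erase]
  split_ifs with h
  · rw [Finset.card_erase_add_one (Finset.mem_filter.mpr ⟨hpc, h⟩)]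
  · have : (p, c) ∉ {e ∈ F | e.2 = w} := fun h' => h (Finset.mem_filter.mp h').2
    rw [Finset.erase_eq_of_notMem this, add_zero]

theorem inDeg_eq_zero_iff : inDeg F c = 0 ↔ ∀ p, (p, c) ∉ F := by
  simp only [inDeg, Finset.card_eq_zero, Finset.filter_eq_empty_iff, Prod.forall]
  exact ⟨fun h p hp => h p c hp rfl, fun h a b hab hb => h a (hb ▸ hab)⟩

theorem outDeg_eq_zero_iff : outDeg F a = 0 ↔ ∀ c, (a, c) ∉ F := by
  simp only [outDeg, Finset.card_eq_zero, Finset.filter_eq_empty_iff, Prod.forall]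
  exact ⟨fun h c hc => h a c hc rfl, fun h x c hxc hx => h c (hx ▸ hxc)⟩

theorem eq_of_mem_of_inDeg_le_one_s6 (h : inDeg F c ≤ 1) (ha : (a, c) ∈ F) (hb : (b, c) ∈ F) :
    a = b :=
  congrArg Prod.fst (Finset.card_le_one.mp h _ (Finset.mem_filter.mpr ⟨ha, rfl⟩) _
    (Finset.mem_filter.mpr ⟨hb, rfl⟩))

end EdgeSet

theorem sum_fst_reparent {F : Finset (ℕ × ℕ)} {c p q : ℕ} (hpc : (p, c) ∈ F) (hqc : (q, c) ∉ F) :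
    ∑ e ∈ reparent F c p q, e.1 + p = ∑ e ∈ F, e.1 + q := by
  rw [reparent, Finset.sum_insert fun h => hqc (Finset.mem_of_mem_erase h), add_assoc,
    Finset.sum_erase_add _ _ hpc, add_comm]

theorem sum_update_add {ι β M : Type*} [DecidableEq ι] [AddCommMonoid M] {s : Finset ι} {i : ι}
    (hi : i ∈ s) (g : ι → β → M) (E : ι → β) (x : β) :
    ∑ l ∈ s, g l (Function.update E i x l) + g i (E i) = ∑ l ∈ s, g l (E l) + g i x := by
  rw [← Finset.add_sum_erase s _ hi, ← Finset.add_sum_erase s (fun l => g l (E l)) hi,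
    Function.update_self, Finset.sum_congr rfl fun l hl => by
      rw [Function.update_of_ne (Finset.ne_of_mem_erase hl)]]
  abel

section Truncation

variable {N : ℕ} {d d' : ℕ∞}

theorem toNat_min_le_toNat_min (h : d ≤ d') : (min d N).toNat ≤ (min d' N).toNat :=
  ENat.toNat_le_toNat (min_le_min_right _ h)
    (ne_top_of_le_ne_top (ENat.natCast_ne_top N) (min_le_right _ _))

theorem toNat_min_lt_toNat_min (h : d < d') (hN : d < N) : (min d N).toNat < (min d' N).toNat := by
  lift d to ℕ using h.ne_top
  obtain ⟨k, hk⟩ := ENat.ne_top_iff_exists.mp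
    (ne_top_of_le_ne_top (ENat.natCast_ne_top N) (min_le_right d' N))
  have : (d : ℕ∞) < k := hk ▸ lt_min h hN
  rw [min_eq_left hN.le, ← hk, ENat.toNat_natCast, ENat.toNat_natCast]
  exact_mod_cast this

theorem sum_toNat_min_lt {ι : Type*} {s : Finset ι} {f f' : ι → ℕ∞} {c : ι}
    (hle : ∀ w ∈ s, f' w ≤ f w) (hc : c ∈ s) (hlt : f' c < f c) (hN : f' c < N) :
    ∑ w ∈ s, (min (f' w) N).toNat < ∑ w ∈ s, (min (f w) N).toNat :=
  Finset.sum_lt_sum (fun w hw => toNat_min_le_toNat_min (hle w hw))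
    ⟨c, hc, toNat_min_lt_toNat_min hlt hN⟩

end Truncation

section Configuration

open Function

variable {N M K : ℕ} {E E' : Cfg} {F : Finset (ℕ × ℕ)} {dbar : ℕ → ℕ}
  {i j r c p q up u uc v vp vc : ℕ}

theorem V_card (N : ℕ) : (V N).card = N := by simp [V]

theorem R_subset_V (hMN : M ≤ N) : R M ⊆ V N := Finset.Icc_subset_Icc_right hMN

noncomputable def truncDepthSum (N : ℕ) (F : Finset (ℕ × ℕ)) (r : ℕ) : ℕ :=
  ∑ u ∈ V N, (min (depth F r u) N).toNat

theorem Yval_eq_sum : Yval N M E = ∑ i ∈ R M, truncDepthSum N (E i) i :=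
  Finset.sum_comm

theorem truncDepthSum_reparent_le (h : depth F r q ≤ depth F r p) :
    truncDepthSum N (reparent F c p q) r ≤ truncDepthSum N F r :=
  Finset.sum_le_sum fun w _ => toNat_min_le_toNat_min (depth_reparent_le h w)

theorem truncDepthSum_reparent_lt (hr : r ∈ V N) (hF : ∀ e ∈ F, e.2 ∈ V N) (hpc : (p, c) ∈ F)
    (h : depth F r q + 1 < depth F r c) :
    truncDepthSum N (reparent F c p q) r < truncDepthSum N F r := by
  have hqp : depth F r q ≤ depth F r p :=
    ((WithTop.add_lt_add_iff_right ENat.one_ne_top).mp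
      (h.trans_le (depth_le_depth_add_one hpc))).le
  have hc : depth (reparent F c p q) r c ≤ depth F r q + 1 :=
    (depth_le_depth_add_one (mem_reparent.mpr (Or.inl rfl))).trans
      (by gcongr; exact depth_reparent_le hqp q)
  have hN := depth_add_one_lt_card hr hF (hF _ hpc) (le_self_add.trans_lt h)
  rw [V_card] at hN
  exact sum_toNat_min_lt (fun w _ => depth_reparent_le hqp w) (hF _ hpc) (hc.trans_lt h)
    (hc.trans_lt hN)

theorem truncDepthSum_leafSwap_lt (hF : UniqueParent F r)
    (hE : ∀ e ∈ F, e.1 ∈ V N ∧ e.2 ∈ V N ∧ e.1 ≠ e.2) (hr : r ∈ V N) (hu : (up, u) ∈ F)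
    (hv : (vp, v) ∈ F) (huc : (u, uc) ∈ F) (hleaf : ∀ c, (v, c) ∉ F)
    (h : depth F r v < depth F r u) :
    truncDepthSum N (reparent (reparent F u up vp) v vp up) r < truncDepthSum N F r := by
  set F'' := reparent (reparent F u up vp) v vp up
  have hvpu : vp ≠ u := by
    rintro rfl
    rw [hF.depth_eq hv] at h
    exact not_lt_of_ge le_self_add h
  have hucv : uc ≠ v := by rintro rfl; exact hvpu (hF.eq_of_mem hv huc)
  have hucu : uc ≠ u := (hE _ huc).2.2.symm
  have hle := depth_leafSwap_le_swap hF hu hv hleaf (hE _ hv).2.2 h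
  have huc'' : depth F'' r uc ≤ depth F r v + 1 :=
    (depth_le_depth_add_one (by simp [F'', mem_reparent, hucu, hucv, huc] : (u, uc) ∈ F'')).trans
      (by gcongr; simpa using hle u)
  have hN := depth_add_one_lt_card hr (fun e he => (hE e he).2.1) (hE _ hu).2.1 h
  rw [V_card] at hN
  have hswap : {x | Equiv.swap u v x ≠ x} ⊆ V N := by
    intro x hx
    obtain ⟨-, rfl | rfl⟩ := Equiv.swap_apply_ne_self_iff.mp hx
    exacts [(hE _ hu).2.1, (hE _ hv).2.1]
  rw [truncDepthSum, truncDepthSum, ← Equiv.Perm.sum_comp (Equiv.swap u v) (V N)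
    (fun w => (min (depth F r w) N).toNat) hswap]
  refine sum_toNat_min_lt (c := uc) (fun w _ => hle w) (hE _ huc).2.1 ?_ (huc''.trans_lt hN)
  rw [Equiv.swap_apply_of_ne_of_ne hucu hucv, hF.depth_eq huc]
  exact huc''.trans_lt ((WithTop.add_lt_add_iff_right ENat.one_ne_top).mpr h)

theorem sum_fst_eq_sum_mul_outDeg (h : ∀ e ∈ F, e.1 ∈ V N) :
    ∑ e ∈ F, e.1 = ∑ u ∈ V N, u * outDeg F u := by
  rw [← Finset.sum_fiberwise_of_maps_to h]
  refine Finset.sum_congr rfl fun u _ => ?_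
  rw [outDeg, Finset.sum_congr rfl fun e he => (Finset.mem_filter.mp he).2, Finset.sum_const,
    smul_eq_mul, mul_comm]

theorem Sval_eq_sum (hE : ValidEdges N M E) : Sval N M E = ∑ l ∈ R M, l * ∑ e ∈ E l, e.1 := by
  rw [Sval]
  simp_rw [Finset.mul_sum]
  rw [Finset.sum_comm]
  refine Finset.sum_congr rfl fun l hl => ?_
  rw [← Finset.mul_sum, sum_fst_eq_sum_mul_outDeg fun e he => (hE l hl e he).1, Finset.mul_sum]
  exact Finset.sum_congr rfl fun u _ => by ring

def Invariant (N M K : ℕ) (E : Cfg) : Prop :=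
  ValidEdges N M E ∧ TreeInit N M K E

theorem Invariant.uniqueParent (hI : Invariant N M K E) (hi : i ∈ R M) :
    UniqueParent (E i) i where
  eq_of_mem ha hb := eq_of_mem_of_inDeg_le_one_s6 (hI.2.2.1 i hi _ (hI.1 i hi _ ha).2.1) ha hb
  not_mem_root := inDeg_eq_zero_iff.mp (hI.2.2.2 i hi)

theorem Invariant.numE_le (hI : Invariant N M K E) : numE M E ≤ K * N := by
  obtain ⟨hE, hinc, -, -⟩ := hI
  calc numE M E = ∑ l ∈ R M, ∑ w ∈ V N, inDeg (E l) w :=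
        Finset.sum_congr rfl fun l hl =>
          Finset.card_eq_sum_card_fiberwise fun e he => (hE l hl e he).2.1
    _ = ∑ w ∈ V N, ∑ l ∈ R M, inDeg (E l) w := Finset.sum_comm
    _ ≤ ∑ _w ∈ V N, K := Finset.sum_le_sum fun w hw => (Nat.le_add_right _ _).trans (hinc w hw)
    _ = K * N := by simp [V_card, mul_comm]

theorem Invariant.Sval_le (hI : Invariant N M K E) : Sval N M E ≤ M * N * (K * N) := by
  have hsum : ∀ l ∈ R M, ∑ e ∈ E l, e.1 ≤ (E l).card * N := fun l hl => by
    simpa using Finset.sum_le_card_nsmul (E l) Prod.fst N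
      (fun e he => (Finset.mem_Icc.mp (hI.1 l hl e he).1).2)
  rw [Sval_eq_sum hI.1]
  calc ∑ l ∈ R M, l * ∑ e ∈ E l, e.1 ≤ ∑ l ∈ R M, M * ((E l).card * N) :=
        Finset.sum_le_sum fun l hl => Nat.mul_le_mul (Finset.mem_Icc.mp hl).2 (hsum l hl)
    _ = M * N * numE M E := by
        rw [numE, Finset.mul_sum]
        exact Finset.sum_congr rfl fun _ _ => by ring
    _ ≤ M * N * (K * N) := Nat.mul_le_mul_left _ hI.numE_le

theorem ValidEdges.update (hE : ValidEdges N M E)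
    (hF : ∀ e ∈ F, e.1 ∈ V N ∧ e.2 ∈ V N ∧ e.1 ≠ e.2) : ValidEdges N M (update E i F) := by
  intro l hl e he
  rcases eq_or_ne l i with rfl | hli
  · exact hF e (by simpa using he)
  · exact hE l hl e (by simpa [hli] using he)

theorem numE_update (hi : i ∈ R M) :
    numE M (update E i F) + (E i).card = numE M E + F.card :=
  sum_update_add hi (fun _ F => F.card) E F

theorem Yval_update (hi : i ∈ R M) :
    Yval N M (update E i F) + truncDepthSum N (E i) i = Yval N M E + truncDepthSum N F i := by
  simpa only [Yval_eq_sum] using sum_update_add hi (fun l F => truncDepthSum N F l) E F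

theorem Sval_update (hE : ValidEdges N M E) (hE' : ValidEdges N M (update E i F))
    (hi : i ∈ R M) :
    Sval N M (update E i F) + i * ∑ e ∈ E i, e.1 = Sval N M E + i * ∑ e ∈ F, e.1 := by
  rw [Sval_eq_sum hE, Sval_eq_sum hE']
  exact sum_update_add hi (fun l F => l * ∑ e ∈ F, e.1) E F

theorem incCount_update (hi : i ∈ R M) (w : ℕ) :
    incCount M (update E i F) w + inDeg (E i) w = incCount M E w + inDeg F w := by
  have := sum_update_add hi (fun _ F => inDeg F w) E F
  simp only [incCount]
  omega

theorem Invariant.update_of_inDeg_eq (hI : Invariant N M K E) (hi : i ∈ R M)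
    (hF : ∀ e ∈ F, e.1 ∈ V N ∧ e.2 ∈ V N ∧ e.1 ≠ e.2) (hdeg : inDeg F = inDeg (E i)) :
    Invariant N M K (update E i F) := by
  have h : ∀ l, inDeg (update E i F l) = inDeg (E l) := by
    intro l
    rcases eq_or_ne l i with rfl | hli
    · simpa using hdeg
    · rw [update_of_ne hli]
  obtain ⟨hE, hinc, hdeg1, hroot⟩ := hI
  refine ⟨hE.update hF, fun w hw => ?_, fun l hl w hw => by rw [h]; exact hdeg1 l hl w hw,
    fun l hl => by rw [h]; exact hroot l hl⟩
  have := incCount_update (E := E) (F := F) hi w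
  have := hinc w hw
  rw [hdeg] at *
  omega

theorem Invariant.update_of_inDeg_eq_add (hI : Invariant N M K E) (hi : i ∈ R M)
    (hF : ∀ e ∈ F, e.1 ∈ V N ∧ e.2 ∈ V N ∧ e.1 ≠ e.2)
    (hdeg : ∀ w, inDeg F w = inDeg (E i) w + if u = w then 1 else 0)
    (hu : incCount M E u < K) (hu0 : inDeg (E i) u = 0) (hui : u ≠ i) :
    Invariant N M K (update E i F) := by
  obtain ⟨hE, hinc, hdeg1, hroot⟩ := hI
  refine ⟨hE.update hF, fun w hw => ?_, fun l hl w hw => ?_, fun l hl => ?_⟩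
  · have h := incCount_update (E := E) (F := F) hi w
    rw [hdeg w] at h
    split_ifs at h with huw
    · subst huw
      omega
    · have := hinc w hw
      omega
  · rcases eq_or_ne l i with rfl | hli
    · rw [update_self, hdeg w]
      split_ifs with huw
      · subst huw
        omega
      · simpa using hdeg1 l hl w hw
    · rw [update_of_ne hli]
      exact hdeg1 l hl w hw
  · rcases eq_or_ne l i with rfl | hli
    · rw [update_self, hdeg l, if_neg hui, hroot l hl]
    · rw [update_of_ne hli]
      exact hroot l hl

theorem Invariant.update_reparent (hI : Invariant N M K E) (hi : i ∈ R M) (hpc : (p, c) ∈ E i)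
    (hq : q ∈ V N) (hqc : q ≠ c) (hqp : q ≠ p) :
    Invariant N M K (update E i (reparent (E i) c p q)) ∧
      numE M (update E i (reparent (E i) c p q)) = numE M E := by
  have hqc' : (q, c) ∉ E i := fun h => hqp ((hI.uniqueParent hi).eq_of_mem h hpc)
  refine ⟨hI.update_of_inDeg_eq hi
    (forall_mem_reparent (hI.1 i hi) ⟨hq, (hI.1 i hi _ hpc).2.1, hqc⟩)
    (inDeg_reparent hpc hqc'), ?_⟩
  have := numE_update (E := E) (F := reparent (E i) c p q) hi
  rw [card_reparent hpc hqc'] at this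
  omega

theorem Yval_update_reparent_le (hi : i ∈ R M) (h : depth (E i) i q ≤ depth (E i) i p) :
    Yval N M (update E i (reparent (E i) c p q)) ≤ Yval N M E := by
  have := Yval_update (N := N) (E := E) (F := reparent (E i) c p q) hi
  have := truncDepthSum_reparent_le (N := N) (c := c) h
  omega

theorem Yval_update_reparent_lt (hMN : M ≤ N) (hE : ValidEdges N M E) (hi : i ∈ R M)
    (hpc : (p, c) ∈ E i) (h : depth (E i) i q + 1 < depth (E i) i c) :
    Yval N M (update E i (reparent (E i) c p q)) < Yval N M E := by
  have := Yval_update (N := N) (E := E) (F := reparent (E i) c p q) hi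
  have := truncDepthSum_reparent_lt (R_subset_V hMN hi) (fun e he => (hE i hi e he).2.1) hpc h
  omega

theorem Sval_update_reparent (hI : Invariant N M K E) (hi : i ∈ R M) (hpc : (p, c) ∈ E i)
    (hq : q ∈ V N) (hqc : q ≠ c) (hqp : q ≠ p) :
    Sval N M (update E i (reparent (E i) c p q)) + i * p = Sval N M E + i * q := by
  have hqc' : (q, c) ∉ E i := fun h => hqp ((hI.uniqueParent hi).eq_of_mem h hpc)
  have h1 := Sval_update hI.1 (hI.update_reparent hi hpc hq hqc hqp).1.1 hi
  have h2 := sum_fst_reparent hpc hqc'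
  linear_combination h1 + i * h2

theorem doAdd_eq : doAdd E up u i = update E i (insert (up, u) (E i)) := by
  funext l
  by_cases hl : l = i <;> simp [doAdd, hl]

theorem doInsert_eq :
    doInsert E up u uc i = update E i (insert (up, u) (reparent (E i) uc up u)) := by
  funext l
  by_cases hl : l = i <;> simp [doInsert, reparent, update_apply, hl]

theorem doJump_eq : doJump E up u v i = update E i (reparent (E i) u up v) := by
  funext l
  by_cases hl : l = i <;> simp [doJump, reparent, update_apply, hl]

theorem doLeafSwap_eq (huv : u ≠ v) :
    doLeafSwap E up u vp v i = update E i (reparent (reparent (E i) u up vp) v vp up) := by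
  funext l
  by_cases hl : l = i <;> simp [doLeafSwap, reparent, update_apply, hl,
    Finset.erase_insert_of_ne (show (vp, u) ≠ (vp, v) by simp [huv])]

theorem doMixSwap_eq (hij : i ≠ j) : doMixSwap E u uc v vc i j =
    update (update E i (reparent (E i) uc u v)) j (reparent (E j) vc v u) := by
  funext l
  rcases eq_or_ne l i with rfl | hli
  · simp [doMixSwap, reparent, hij]
  rcases eq_or_ne l j with rfl | hlj
  · simp [doMixSwap, reparent, hli]
  · simp [doMixSwap, hli, hlj]

theorem Invariant.addStep (hI : Invariant N M K E) (h : AddApp N M K E dbar up u i) :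
    Invariant N M K (doAdd E up u i) ∧ numE M E < numE M (doAdd E up u i) := by
  obtain ⟨hi, hup, hu, hcap, hnot, hhas, -⟩ := h
  obtain ⟨hnoin, hui⟩ : (∀ w, (w, u) ∉ E i) ∧ u ≠ i := by simpa [HasIn, not_or] using hnot
  have hupu : up ≠ u := by rintro rfl; exact hnot hhas
  have hnew : (up, u) ∉ E i := hnoin up
  rw [doAdd_eq]
  refine ⟨hI.update_of_inDeg_eq_add hi ?_ (inDeg_insert hnew) hcap (inDeg_eq_zero_iff.mpr hnoin)
    hui, ?_⟩
  · intro e he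
    rcases Finset.mem_insert.mp he with rfl | he
    exacts [⟨hup, hu, hupu⟩, hI.1 i hi e he]
  · have := numE_update (E := E) (F := insert (up, u) (E i)) hi
    rw [Finset.card_insert_of_notMem hnew] at this
    omega

theorem Invariant.insertStep (hI : Invariant N M K E) (h : InsertApp N M K E up u uc i) :
    Invariant N M K (doInsert E up u uc i) ∧ numE M E < numE M (doInsert E up u uc i) := by
  obtain ⟨hi, hup, hu, hcap, hnot, hhas, hupuc⟩ := h
  obtain ⟨hnoin, hui⟩ : (∀ w, (w, u) ∉ E i) ∧ u ≠ i := by simpa [HasIn, not_or] using hnot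
  have hupu : up ≠ u := by rintro rfl; exact hnot hhas
  have hucu : (u, uc) ∉ E i := fun h => hupu ((hI.uniqueParent hi).eq_of_mem hupuc h)
  have hnew : (up, u) ∉ reparent (E i) uc up u := by simp [mem_reparent, hupu, hnoin]
  have hdeg : ∀ w, inDeg (insert (up, u) (reparent (E i) uc up u)) w =
      inDeg (E i) w + if u = w then 1 else 0 := fun w => by
    rw [inDeg_insert hnew, inDeg_reparent hupuc hucu]
  rw [doInsert_eq]
  refine ⟨hI.update_of_inDeg_eq_add hi ?_ hdeg hcap (inDeg_eq_zero_iff.mpr hnoin) hui, ?_⟩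
  · intro e he
    rcases Finset.mem_insert.mp he with rfl | he
    · exact ⟨hup, hu, hupu⟩
    · exact forall_mem_reparent (hI.1 i hi)
        ⟨hu, (hI.1 i hi _ hupuc).2.1, fun (h : u = uc) => hnoin up (h ▸ hupuc)⟩ e he
  · have := numE_update (E := E) (F := insert (up, u) (reparent (E i) uc up u)) hi
    rw [Finset.card_insert_of_notMem hnew, card_reparent hupuc hucu] at this
    omega

theorem Invariant.jumpStep (hMN : M ≤ N) (hI : Invariant N M K E) (hmem : (up, u) ∈ E i)
    (h : JumpApp M E dbar u v i) :
    Invariant N M K (doJump E up u v i) ∧ numE M (doJump E up u v i) = numE M E ∧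
      Yval N M (doJump E up u v i) < Yval N M E := by
  obtain ⟨hi, -, -, -, hlt⟩ := h
  have hvV : v ∈ V N := mem_of_depth_ne_top (R_subset_V hMN hi)
    (fun e he => (hI.1 i hi e he).2.1) (le_self_add.trans_lt hlt).ne_top
  have hvu : v ≠ u := by rintro rfl; exact not_lt_of_ge le_self_add hlt
  have hvup : v ≠ up := by
    rintro rfl
    rw [(hI.uniqueParent hi).depth_eq hmem] at hlt
    exact lt_irrefl _ hlt
  rw [doJump_eq]
  obtain ⟨hI', hn⟩ := hI.update_reparent hi hmem hvV hvu hvup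
  exact ⟨hI', hn, Yval_update_reparent_lt hMN hI.1 hi hmem hlt⟩

theorem Invariant.leafSwapStep (hMN : M ≤ N) (hI : Invariant N M K E) (hu : (up, u) ∈ E i)
    (hv : (vp, v) ∈ E i) (h : LeafSwapApp M E u v i) :
    Invariant N M K (doLeafSwap E up u vp v i) ∧ numE M (doLeafSwap E up u vp v i) = numE M E ∧
      Yval N M (doLeafSwap E up u vp v i) < Yval N M E := by
  obtain ⟨hi, -, -, hv0, hu0, hlt⟩ := h
  have hF := hI.uniqueParent hi
  have hleaf : ∀ c, (v, c) ∉ E i := outDeg_eq_zero_iff.mp hv0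
  obtain ⟨uc, huc⟩ : ∃ uc, (u, uc) ∈ E i := by
    by_contra! h
    exact hu0.ne' (outDeg_eq_zero_iff.mpr h)
  have hdvp : depth (E i) i vp < depth (E i) i up := by
    rw [hF.depth_eq hu, hF.depth_eq hv] at hlt
    exact (WithTop.add_lt_add_iff_right ENat.one_ne_top).mp hlt
  have huv : u ≠ v := by rintro rfl; exact lt_irrefl _ hlt
  have hvpup : vp ≠ up := by rintro rfl; exact lt_irrefl _ hdvp
  have hvpu : vp ≠ u := by
    rintro rfl
    rw [hF.depth_eq hu] at hdvp
    exact not_lt_of_ge le_self_add hdvp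
  have hupv : up ≠ v := by rintro rfl; exact hleaf u hu
  rw [doLeafSwap_eq huv]
  obtain ⟨hI₁, hn₁⟩ := hI.update_reparent hi hu (hI.1 i hi _ hv).1 hvpu hvpup
  obtain ⟨hI₂, hn₂⟩ := hI₁.update_reparent hi (p := vp) (c := v)
    (by simp [mem_reparent, huv.symm, hv]) (hI.1 i hi _ hu).1 hupv hvpup.symm
  simp only [update_self, update_idem] at hI₂ hn₂
  have hY := Yval_update (N := N) (E := E) (F := reparent (reparent (E i) u up vp) v vp up) hi
  have := truncDepthSum_leafSwap_lt hF (hI.1 i hi) (R_subset_V hMN hi) hu hv huc hleaf hlt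
  exact ⟨hI₂, hn₂.trans hn₁, by omega⟩

theorem Invariant.mixSwapStep (hMN : M ≤ N) (hI : Invariant N M K E)
    (h : MixSwapApp M E u uc v vc i j) :
    Invariant N M K (doMixSwap E u uc v vc i j) ∧
      numE M (doMixSwap E u uc v vc i j) = numE M E ∧
      (Yval N M (doMixSwap E u uc v vc i j) < Yval N M E ∨
        Yval N M (doMixSwap E u uc v vc i j) ≤ Yval N M E ∧
          Sval N M E < Sval N M (doMixSwap E u uc v vc i j)) := by
  obtain ⟨hi, hj, hij, huv, hu, hv, hucv, hvcu, hdi, hdj, hcase⟩ := h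
  have huV : u ∈ V N := (hI.1 i hi _ hu).1
  have hvV : v ∈ V N := (hI.1 j hj _ hv).1
  have hstrict (hlt : depth (E i) i v < depth (E i) i u) :
      Yval N M (update E i (reparent (E i) uc u v)) < Yval N M E := by
    refine Yval_update_reparent_lt hMN hI.1 hi hu ?_
    rw [(hI.uniqueParent hi).depth_eq hu]
    exact (WithTop.add_lt_add_iff_right ENat.one_ne_top).mpr hlt
  obtain ⟨hI₁, hn₁⟩ := hI.update_reparent hi hu hvV hucv.symm huv.symm
  have hY₁ := Yval_update_reparent_le (N := N) (c := uc) hi hdi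
  have hS₁ := Sval_update_reparent hI hi hu hvV hucv.symm huv.symm
  have hE₁j : update E i (reparent (E i) uc u v) j = E j := update_of_ne hij.symm _ _
  rw [doMixSwap_eq hij]
  generalize update E i (reparent (E i) uc u v) = E₁ at hI₁ hn₁ hY₁ hS₁ hstrict hE₁j ⊢
  rw [← hE₁j] at hv hdj ⊢
  obtain ⟨hI₂, hn₂⟩ := hI₁.update_reparent hj hv huV hvcu.symm huv
  have hY₂ := Yval_update_reparent_le (N := N) (c := vc) hj hdj
  refine ⟨hI₂, hn₂.trans hn₁, ?_⟩
  rcases hcase with hne | hpos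
  · left
    rcases hdi.lt_or_eq with hlt | heq
    · exact hY₂.trans_lt (hstrict hlt)
    rcases hdj.lt_or_eq with hlt | heq'
    · refine (Yval_update_reparent_lt hMN hI₁.1 hj hv ?_).trans_le hY₁
      rw [(hI₁.uniqueParent hj).depth_eq hv]
      exact (WithTop.add_lt_add_iff_right ENat.one_ne_top).mpr hlt
    · exact absurd (by rw [heq, ← hE₁j, heq']) hne
  · right
    refine ⟨hY₂.trans hY₁, ?_⟩
    have hS₂ := Sval_update_reparent hI₁ hj hv huV hvcu.symm huv
    zify at hS₁ hS₂ ⊢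
    linear_combination hpos - hS₁ - hS₂

/-- The truncated subtractions are exact on configurations satisfying `Invariant`. -/
noncomputable def potential (N M K : ℕ) (E : Cfg) : ℕ ×ₗ ℕ ×ₗ ℕ :=
  toLex (K * N - numE M E, toLex (Yval N M E, M * N * (K * N) - Sval N M E))

theorem potential_lt (hI' : Invariant N M K E')
    (h : numE M E < numE M E' ∨ numE M E' = numE M E ∧
      (Yval N M E' < Yval N M E ∨ Yval N M E' ≤ Yval N M E ∧ Sval N M E < Sval N M E')) :
    potential N M K E' < potential N M K E := by
  have := hI'.numE_le
  have := hI'.Sval_le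
  simp only [potential, Prod.Lex.toLex_lt_toLex]
  generalize K * N = B₁ at *
  generalize M * N * B₁ = B₃ at *
  omega

theorem Invariant.step (hMN : M ≤ N) (hI : Invariant N M K E) (h : Step N M K dbar E E') :
    Invariant N M K E' ∧ potential N M K E' < potential N M K E := by
  rcases h with ⟨up, u, i, h, rfl⟩ | ⟨up, u, uc, i, h, rfl⟩ | ⟨up, u, v, i, hu, h, rfl⟩ |
    ⟨up, u, vp, v, i, hu, hv, h, rfl⟩ | ⟨u, uc, v, vc, i, j, h, rfl⟩
  · obtain ⟨hI', hlt⟩ := hI.addStep h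
    exact ⟨hI', potential_lt hI' (Or.inl hlt)⟩
  · obtain ⟨hI', hlt⟩ := hI.insertStep h
    exact ⟨hI', potential_lt hI' (Or.inl hlt)⟩
  · obtain ⟨hI', hn, hY⟩ := hI.jumpStep hMN hu h
    exact ⟨hI', potential_lt hI' (Or.inr ⟨hn, Or.inl hY⟩)⟩
  · obtain ⟨hI', hn, hY⟩ := hI.leafSwapStep hMN hu hv h
    exact ⟨hI', potential_lt hI' (Or.inr ⟨hn, Or.inl hY⟩)⟩
  · obtain ⟨hI', hn, hY⟩ := hI.mixSwapStep hMN h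
    exact ⟨hI', potential_lt hI' (Or.inr ⟨hn, hY⟩)⟩

end Configuration

theorem no_infinite_update_sequence_general
    (N M K : ℕ) (hMN : M ≤ N)
    (dbar : ℕ → ℕ) (C : ℕ → Cfg)
    (hvalid : ValidEdges N M (C 0)) (htree : TreeInit N M K (C 0)) :
    ¬ ∀ t : ℕ, Step N M K dbar (C t) (C (t + 1)) := by
  intro hstep
  have hI : ∀ t, Invariant N M K (C t) := fun t =>
    Nat.rec ⟨hvalid, htree⟩ (fun t ih => (ih.step hMN (hstep t)).1) t
  exact not_strictAnti_of_wellFoundedLT (fun t => potential N M K (C t))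
    (strictAnti_nat_of_succ_lt fun t => ((hI t).step hMN (hstep t)).2)

/-- starting from a Tree Initially configuration, there is no
infinite sequence of configurations in which each one is obtained from the
previous by an applicable Add, Insert, Jump, LeafSwap or MixSwap. -/
theorem no_infinite_update_sequence
    (N M K : ℕ) (hK : 0 < K) (hKM : K ≤ M) (hMN : M ≤ N)
    (dbar : ℕ → ℕ) (C : ℕ → Cfg)
    (hvalid : ValidEdges N M (C 0)) (htree : TreeInit N M K (C 0)) :
    ¬ ∀ t : ℕ, Step N M K dbar (C t) (C (t + 1)) :=
  no_infinite_update_sequence_general N M K hMN dbar C hvalid htree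

end P2P
end
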